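/- Let s = (s₁,s₂,s₃) ∈ ℝ³ with s₁,s₂,s₃ > 0, let v := ((s₂-s₃)/s₁, (s₃-s₁)/s₂, (s₁-s₂)/s₃)ᵀ, and for a = (a₁,a₂,a₃) ∈ ℝ³ let N(a) be the symmetric 3×3 real matrix with zero diagonal and off-diagonal entries N(a)₁₂ = -2a₃, N(a)₁₃ = -2a₂, N(a)₂₃ = -2a₁. Then vᵀ N(a) v = (4/(s₁s₂s₃)) · Σ_{r=1}^{3} s_r(s_r - s_{r+1})(s_r - s_{r+2}) a_r (indices mod 3). -/
import Mathlib

open Matrix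

/-- `S(s) = 2(s₁s₂+s₁s₃+s₂s₃) - (s₁²+s₂²+s₃²)`. -/
noncomputable def Spoly (s : Fin 3 → ℝ) : ℝ :=
  2 * (s 0 * s 1 + s 0 * s 2 + s 1 * s 2) - (s 0 ^ 2 + s 1 ^ 2 + s 2 ^ 2)

/-- `p_r(s) = (s_{r+1}-s_{r+2})² + 2 s_r (s_{r+1}+s_{r+2}) - 3 s_r²`, indices mod 3. -/
noncomputable def ppoly (s : Fin 3 → ℝ) (r : Fin 3) : ℝ :=
  (s (r + 1) - s (r + 2)) ^ 2 + 2 * s r * (s (r + 1) + s (r + 2)) - 3 * s r ^ 2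

/-- `a_r⁰(s) = ((s_{r+1}-s_{r+2})² - s_r²)/(2 s_r)`, indices mod 3. -/
noncomputable def a0 (s : Fin 3 → ℝ) (r : Fin 3) : ℝ :=
  ((s (r + 1) - s (r + 2)) ^ 2 - s r ^ 2) / (2 * s r)

/-- Restriction of the invariant 4-form `ζ' = a₁ζ₁ + a₂ζ₂ + a₃ζ₃` to the kernel of
`R + ω₀` on `W²⁴`: `vᵀ N(a) v = (4/(s₁s₂s₃)) Σ_r s_r (s_r - s_{r+1})(s_r - s_{r+2}) a_r`. -/
theorem form_on_kernel (s : Fin 3 → ℝ) (hs : ∀ r, 0 < s r) (a : Fin 3 → ℝ) :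
    (fun r : Fin 3 => (s (r + 1) - s (r + 2)) / s r) ⬝ᵥ
      (!![(0 : ℝ), -2 * a 2, -2 * a 1;
          -2 * a 2, 0, -2 * a 0;
          -2 * a 1, -2 * a 0, 0]).mulVec
        (fun r : Fin 3 => (s (r + 1) - s (r + 2)) / s r)
      = 4 / (s 0 * s 1 * s 2) *
          ∑ r : Fin 3, s r * (s r - s (r + 1)) * (s r - s (r + 2)) * a r := by
  have h0 := (hs 0).ne'
  have h1 := (hs 1).ne'
  have h2 := (hs 2).ne'
  simp [dotProduct, mulVec, Fin.sum_univ_three, Fin.isValue, Matrix.cons_val_zero,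
    Matrix.cons_val_one, Matrix.head_cons]
  field_simp
  ring
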